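/- Let f_1(x) = x/2 and f_2(x) = (3x + 1)/2 be affine maps of ℝ. Then the semigroup generated by f_1 and f_2 is free of rank 2 with free basis f_1, f_2: for any two finite sequences of indices in {1, 2}, if the corresponding compositions of f_1 and f_2 are equal as functions on ℝ, then the two index sequences are identical. -/

import Mathlib

/-!
Every composition of `n` branches, `k` of which are `x ↦ (3x + 1)/2`, is the affine map
`x ↦ (3^k x + m)/2^n` with `m ∈ ℤ`. By unique factorisation the slope `3^k/2^n` determines `n`,
and then the value at `0` determines `m`, whose parity is that of the innermost branch applied.
Both branches are surjective, so the innermost one cancels on the right and induction finishes.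
-/

open Function

theorem Nat.pow_right_eq_of_coprime_of_pow_mul_pow_eq {m n a b c d : ℕ} (hmn : m.Coprime n)
    (hn : 1 < n) (h : m ^ a * n ^ b = m ^ c * n ^ d) : b = d := by
  have key : ∀ {a b c d}, m ^ a * n ^ b = m ^ c * n ^ d → b ≤ d := fun {a b c d} h =>
    (Nat.pow_dvd_pow_iff_le_right hn).1 <|
      ((hmn.pow c b).symm.dvd_of_dvd_mul_left (h ▸ Dvd.intro_left _ rfl))
  exact (key h).antisymm (key h.symm)

section WordMap

variable {ι α : Type*} (f : ι → α → α)

def wordMap (w : List ι) : α → α := (w.map f).foldr (· ∘ ·) id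

@[simp]
theorem wordMap_nil : wordMap f [] = id := rfl

@[simp]
theorem wordMap_cons (i : ι) (w : List ι) : wordMap f (i :: w) = f i ∘ wordMap f w := rfl

theorem wordMap_append_singleton (w : List ι) (i : ι) :
    wordMap f (w ++ [i]) = wordMap f w ∘ f i := by
  induction w with
  | nil => rfl
  | cons j w ih => simp [ih, comp_assoc]

variable {f}

theorem wordMap_injective_of_surjective (hsurj : ∀ i, Surjective (f i))
    (hlength : ∀ w₁ w₂, wordMap f w₁ = wordMap f w₂ → w₁.length = w₂.length)
    (hlast : ∀ l t i j, wordMap f (l ++ [i]) = wordMap f (t ++ [j]) → i = j) :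
    Injective (wordMap f) := by
  intro w₁
  induction w₁ using List.reverseRecOn with
  | nil => exact fun w₂ h => (List.length_eq_zero_iff.1 (hlength _ _ h).symm).symm
  | append_singleton l i ih =>
    intro w₂ h
    obtain rfl | ⟨t, j, rfl⟩ := w₂.eq_nil_or_concat'
    · simpa using hlength _ _ h
    obtain rfl := hlast l t i j h
    rw [wordMap_append_singleton, wordMap_append_singleton] at h
    rw [ih ((hsurj i).injective_comp_right h)]

end WordMap

namespace Collatz

noncomputable def branch : Fin 2 → ℝ → ℝ := ![fun x => x / 2, fun x => (3 * x + 1) / 2]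

def intercept : List (Fin 2) → ℤ
  | [] => 0
  | i :: w => if i = 0 then intercept w else 3 * intercept w + 2 ^ w.length

theorem branch_zero (x : ℝ) : branch 0 x = x / 2 := rfl

theorem branch_one (x : ℝ) : branch 1 x = (3 * x + 1) / 2 := rfl

theorem branch_surjective (i : Fin 2) : Surjective (branch i) := by
  fin_cases i
  · exact fun y => ⟨2 * y, by rw [Fin.zero_eta, branch_zero]; ring⟩
  · exact fun y => ⟨(2 * y - 1) / 3, by rw [Fin.mk_one, branch_one]; ring⟩

theorem wordMap_branch_apply (w : List (Fin 2)) (x : ℝ) :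
    wordMap branch w x = (3 ^ w.count 1 * x + intercept w) / 2 ^ w.length := by
  induction w with
  | nil => simp [intercept]
  | cons i w ih =>
    rw [wordMap_cons, comp_apply, ih]
    fin_cases i
    · simp only [Fin.zero_eta, branch_zero, intercept, if_pos, List.count_cons_of_ne zero_ne_one,
        List.length_cons, pow_succ, div_div]
    · simp only [Fin.mk_one, branch_one, intercept, one_ne_zero, if_false, List.count_cons_self,
        List.length_cons]
      push_cast
      field_simp
      ring

theorem odd_intercept_append_singleton_iff (w : List (Fin 2)) (i : Fin 2) :
    Odd (intercept (w ++ [i])) ↔ i = 1 := by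
  induction w with
  | nil => fin_cases i <;> simp [intercept]
  | cons j w ih =>
    have h3 : Odd (3 : ℤ) := by decide
    fin_cases j <;> simp [intercept, ih, Int.odd_add, Int.odd_mul, Int.even_pow, h3]

theorem length_eq_of_wordMap_branch_eq {w₁ w₂ : List (Fin 2)}
    (h : wordMap branch w₁ = wordMap branch w₂) : w₁.length = w₂.length := by
  have hslope : ∀ w, wordMap branch w 1 - wordMap branch w 0 = 3 ^ w.count 1 / 2 ^ w.length :=
    fun w => by rw [wordMap_branch_apply, wordMap_branch_apply]; ring
  have hreal := hslope w₁
  rw [h, hslope w₂, div_eq_div_iff (by positivity) (by positivity)] at hreal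
  have hnat : 3 ^ w₂.count 1 * 2 ^ w₁.length = 3 ^ w₁.count 1 * 2 ^ w₂.length := by
    exact_mod_cast hreal
  exact Nat.pow_right_eq_of_coprime_of_pow_mul_pow_eq (by norm_num) (by norm_num) hnat

theorem intercept_eq_of_wordMap_branch_eq {w₁ w₂ : List (Fin 2)}
    (h : wordMap branch w₁ = wordMap branch w₂) : intercept w₁ = intercept w₂ := by
  have h0 := congrFun h 0
  rw [wordMap_branch_apply, wordMap_branch_apply, length_eq_of_wordMap_branch_eq h] at h0
  simpa using h0

theorem wordMap_branch_injective : Injective (wordMap branch) := by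
  refine wordMap_injective_of_surjective branch_surjective
    (fun _ _ => length_eq_of_wordMap_branch_eq) fun l t i j h => ?_
  have hodd := congrArg Odd (intercept_eq_of_wordMap_branch_eq h)
  rw [odd_intercept_append_singleton_iff, odd_intercept_append_singleton_iff] at hodd
  fin_cases i <;> fin_cases j <;> simp_all

end Collatz

/-- The affine maps `f₁ x = x / 2` and `f₂ x = (3x + 1) / 2` generate a free
semigroup of rank 2 with free basis `f₁, f₂`: any two index words over `{1, 2}`
giving the same composition are identical. -/
theorem collatz_maps_generate_free_semigroup
    (f : Fin 2 → ℝ → ℝ)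
    (hf : f = ![fun x => x / 2, fun x => (3 * x + 1) / 2]) :
    ∀ w₁ w₂ : List (Fin 2),
      (w₁.map f).foldr (· ∘ ·) id = (w₂.map f).foldr (· ∘ ·) id → w₁ = w₂ := by
  subst hf
  exact fun _ _ h => Collatz.wordMap_branch_injective h
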